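/- For all 1 ≤ i, j ≤ n and all z, z' ∈ ℂ^n, ∫_{ℂ^n} 𝒫(z, w) · w_i w_j · 𝒫(w, z') dW = z_i z_j · 𝒫(z, z') and ∫_{ℂ^n} 𝒫(z, w) · w̄_i w̄_j · 𝒫(w, z') dW = z̄'_i z̄'_j · 𝒫(z, z'). -/

import Mathlib

open MeasureTheory Complex

noncomputable section

/-- The Wirtinger derivative `∂/∂z_j` of a function on `ℂⁿ ≅ ℝ^{2n}`. -/
def wirtingerD {n : ℕ} (j : Fin n) (f : (Fin n → ℂ) → ℂ) (z : Fin n → ℂ) : ℂ :=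
  (1 / 2) * (fderiv ℝ f z (Pi.single j 1) - Complex.I * fderiv ℝ f z (Pi.single j Complex.I))

/-- The Wirtinger derivative `∂/∂z̄_j` of a function on `ℂⁿ ≅ ℝ^{2n}`. -/
def wirtingerDBar {n : ℕ} (j : Fin n) (f : (Fin n → ℂ) → ℂ) (z : Fin n → ℂ) : ℂ :=
  (1 / 2) * (fderiv ℝ f z (Pi.single j 1) + Complex.I * fderiv ℝ f z (Pi.single j Complex.I))

/-- The creation operator `b_j = -2 ∂/∂z_j + π z̄_j`. -/
def bOp {n : ℕ} (j : Fin n) (f : (Fin n → ℂ) → ℂ) : (Fin n → ℂ) → ℂ :=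
  fun z => -2 * wirtingerD j f z + (Real.pi : ℂ) * (starRingEnd ℂ) (z j) * f z

/-- The annihilation operator `b_j⁺ = 2 ∂/∂z̄_j + π z_j`. -/
def bPlusOp {n : ℕ} (j : Fin n) (f : (Fin n → ℂ) → ℂ) : (Fin n → ℂ) → ℂ :=
  fun z => 2 * wirtingerDBar j f z + (Real.pi : ℂ) * z j * f z

/-- The Gaussian `exp(-(π/2) Σ |z_i|²)`. -/
def gaussFn {n : ℕ} (z : Fin n → ℂ) : ℂ :=
  Complex.exp (-((Real.pi : ℂ) / 2) * ∑ i, (Complex.normSq (z i) : ℂ))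

/-- The iterated operator `b^α = b_1^{α_1} ∘ ⋯ ∘ b_n^{α_n}`. -/
def bPow {n : ℕ} (α : Fin n → ℕ) (f : (Fin n → ℂ) → ℂ) : (Fin n → ℂ) → ℂ :=
  (List.ofFn (fun j : Fin n => (bOp j)^[α j])).foldr (· ∘ ·) id f

/-- The eigenfunctions `f_{α,β} = b^α (z^β exp(-(π/2) Σ |z_i|²))` of the model operator. -/
def eigFun {n : ℕ} (α β : Fin n → ℕ) : (Fin n → ℂ) → ℂ :=
  bPow α (fun z => (∏ j, z j ^ β j) * gaussFn z)

/-- The model Bergman kernel `𝒫(z,w) = exp(-(π/2) Σ (|z_j|² + |w_j|² - 2 z_j w̄_j))`. -/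
def bergK {n : ℕ} (z w : Fin n → ℂ) : ℂ :=
  Complex.exp (-((Real.pi : ℂ) / 2) *
    ∑ j, ((Complex.normSq (z j) : ℂ) + (Complex.normSq (w j) : ℂ)
            - 2 * z j * (starRingEnd ℂ) (w j)))

/-- `F : ℂⁿ × ℂⁿ → ℂ` is a polynomial function in the underlying real coordinates, equivalently
a polynomial in the coordinates `z_i, z̄_i` of the first argument and `z'_i, z̄'_i` of the
second one. -/
def IsPolyKernel {n : ℕ} (F : (Fin n → ℂ) → (Fin n → ℂ) → ℂ) : Prop :=
  ∃ p : MvPolynomial (Fin n ⊕ Fin n ⊕ Fin n ⊕ Fin n) ℂ,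
    ∀ z z' : Fin n → ℂ,
      F z z' = MvPolynomial.eval
        (Sum.elim (fun i => z i) (Sum.elim (fun i => (starRingEnd ℂ) (z i))
          (Sum.elim (fun i => z' i) (fun i => (starRingEnd ℂ) (z' i))))) p

/-- Under the identification `ℝ^{2n} ≅ ℂⁿ`, `z_j = Z_{2j-1} + i Z_{2j}`, the direction in `ℂⁿ`
corresponding to the `j`-th real coordinate `Z_j`. -/
def coordDir {n : ℕ} (j : Fin (2 * n)) : Fin n → ℂ :=
  Pi.single ⟨j.val / 2, by have := j.isLt; omega⟩ (if j.val % 2 = 0 then 1 else Complex.I)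

/-- The `j`-th real coordinate of `w ∈ ℂⁿ ≅ ℝ^{2n}`, viewed as a complex number. -/
def realCoordC {n : ℕ} (j : Fin (2 * n)) (w : Fin n → ℂ) : ℂ :=
  if j.val % 2 = 0 then ((w ⟨j.val / 2, by have := j.isLt; omega⟩).re : ℂ)
  else ((w ⟨j.val / 2, by have := j.isLt; omega⟩).im : ℂ)

/-- The partial derivative `∂/∂Z_j` in the `j`-th real coordinate of `ℂⁿ ≅ ℝ^{2n}`. -/
def realPDeriv {n : ℕ} (j : Fin (2 * n)) (f : (Fin n → ℂ) → ℂ) (z : Fin n → ℂ) : ℂ :=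
  fderiv ℝ f z (coordDir j)

/-- The iterated partial derivative `∂^α` in the real coordinates of `ℂⁿ ≅ ℝ^{2n}`,
for a multi-index `α ∈ ℕ^{2n}`. -/
def iterD {n : ℕ} (α : Fin (2 * n) → ℕ) (f : (Fin n → ℂ) → ℂ) : (Fin n → ℂ) → ℂ :=
  (List.ofFn (fun j : Fin (2 * n) =>
    (fun (g : (Fin n → ℂ) → ℂ) (z : Fin n → ℂ) => fderiv ℝ g z (coordDir j))^[α j])).foldr
    (· ∘ ·) id f

/-!
Put `G(a, b; w) = exp (-π (w - a) (w̄ - b))`, the Gaussian `exp (-π |w - a|²)` when `b = ā`.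
Then `𝒫(z, w) 𝒫(w, z') = 𝒫(z, z') ∏ₖ G(zₖ, z̄'ₖ; wₖ)`, so both integrals factor over the
coordinates. In one variable `∫ G = 1` is a Gaussian integral in real coordinates, and since
`∂G/∂w̄ = π (a - w) G`, integrating by parts against the holomorphic `wᵐ` gives
`∫ wᵐ⁺¹ G = a ∫ wᵐ G`, hence `∫ wᵐ G = aᵐ`. Conjugating the variable swaps `a` and `b`, which
gives `∫ w̄ᵐ G = bᵐ`.
-/

open scoped Real ComplexConjugate
open Filter

lemma integrable_exp_neg_mul_sq_norm {V : Type*} [NormedAddCommGroup V] [InnerProductSpace ℝ V]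
    [FiniteDimensional ℝ V] [MeasurableSpace V] [BorelSpace V] {c : ℝ} (hc : 0 < c) :
    Integrable fun v : V => Real.exp (-c * ‖v‖ ^ 2) := by
  have h := (GaussianFourier.integrable_cexp_neg_mul_sq_norm_add (V := V) (b := c)
    (by simpa using hc) 0 0).norm
  simpa [Complex.norm_exp, ← Complex.ofReal_pow] using h

lemma exp_mul_add_sub_mul_sq_le {c : ℝ} (hc : 0 < c) (β γ r : ℝ) :
    Real.exp (β * r + γ - c * r ^ 2)
      ≤ Real.exp (β ^ 2 / (2 * c) + γ) * Real.exp (-(c / 2) * r ^ 2) := by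
  rw [← Real.exp_add, Real.exp_le_exp, div_add' _ _ _ (by positivity),
    div_add' _ _ _ (by positivity), le_div_iff₀ (by positivity)]
  nlinarith [sq_nonneg (β - c * r)]

-- `fderiv ℝ g w 1 + I * fderiv ℝ g w I` is `2 ∂g/∂w̄`.
lemma integral_mul_fderiv_add_I_mul_fderiv_eq_zero {f g : ℂ → ℂ} (hf : Differentiable ℂ f)
    (hg : Differentiable ℝ g) (hfg : Integrable fun w => f w * g w)
    (hf'g : Integrable fun w => deriv f w * g w)
    (hfg'_one : Integrable fun w => f w * fderiv ℝ g w 1)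
    (hfg'_I : Integrable fun w => f w * fderiv ℝ g w I) :
    ∫ w, f w * (fderiv ℝ g w 1 + I * fderiv ℝ g w I) = 0 := by
  have hfderiv : ∀ w v, fderiv ℝ f w v = v * deriv f w := fun w v => by
    rw [(hf w).hasDerivAt.hasFDerivAt.restrictScalars ℝ |>.fderiv]
    simp
  have hparts : ∀ v, (Integrable fun w => f w * fderiv ℝ g w v) →
      ∫ w, f w * fderiv ℝ g w v = -(v * ∫ w, deriv f w * g w) := fun v hv => by
    rw [integral_mul_fderiv_eq_neg_fderiv_mul_of_integrable
      (by simpa only [hfderiv, mul_assoc] using hf'g.const_mul v) hv hfg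
      (fun w _ => (hf w).restrictScalars ℝ) (fun w _ => hg w)]
    simp only [hfderiv, mul_assoc, integral_const_mul]
  simp only [mul_add, mul_left_comm (f _) I]
  rw [integral_add hfg'_one (hfg'_I.const_mul I), integral_const_mul, hparts 1 hfg'_one,
    hparts I hfg'_I]
  linear_combination -(∫ w, deriv f w * g w) * I_sq

def twistedGaussian (a b w : ℂ) : ℂ :=
  cexp (-π * ((w - a) * (conj w - b)))

section TwistedGaussian

variable (a b : ℂ)

lemma hasFDerivAt_twistedGaussian (w : ℂ) :
    HasFDerivAt (twistedGaussian a b) (twistedGaussian a b w • (-π : ℂ) •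
      ((w - a) • conjCLE.toContinuousLinearMap + (conj w - b) • .id ℝ ℂ)) w :=
  ((((hasFDerivAt_id w).sub_const a).mul
    (conjCLE.hasFDerivAt.sub_const b)).const_mul (-π : ℂ)).cexp

lemma differentiable_twistedGaussian : Differentiable ℝ (twistedGaussian a b) :=
  fun w => (hasFDerivAt_twistedGaussian a b w).differentiableAt

lemma fderiv_twistedGaussian_apply (w v : ℂ) :
    fderiv ℝ (twistedGaussian a b) w v
      = -π * ((w - a) * conj v + (conj w - b) * v) * twistedGaussian a b w := by
  rw [(hasFDerivAt_twistedGaussian a b w).fderiv]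
  simp only [smul_apply, add_apply,
    ContinuousLinearEquiv.coe_coe, conjCLE_apply, ContinuousLinearMap.id_apply, smul_eq_mul]
  ring

lemma fderiv_twistedGaussian_one_add_I_mul (w : ℂ) :
    fderiv ℝ (twistedGaussian a b) w 1 + I * fderiv ℝ (twistedGaussian a b) w I
      = 2 * π * (a - w) * twistedGaussian a b w := by
  simp only [fderiv_twistedGaussian_apply, map_one, conj_I]
  linear_combination (π : ℂ) * (b - a + w - conj w) * twistedGaussian a b w * I_sq

lemma twistedGaussian_conj (w : ℂ) : twistedGaussian a b (conj w) = twistedGaussian b a w := by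
  simp only [twistedGaussian, conj_conj, mul_comm (conj w - a)]

lemma norm_twistedGaussian_le (w : ℂ) :
    ‖twistedGaussian a b w‖
      ≤ Real.exp (π * (‖a‖ + ‖b‖) * ‖w‖ + π * (‖a‖ * ‖b‖) - π * ‖w‖ ^ 2) := by
  rw [twistedGaussian, Complex.norm_exp, Real.exp_le_exp]
  have hexpand : (-π * ((w - a) * (conj w - b)) : ℂ).re
      = π * (a * conj w + b * w).re - π * (a * b).re - π * ‖w‖ ^ 2 := by
    have h : -π * ((w - a) * (conj w - b))
        = π * (a * conj w + b * w) - π * (a * b) - π * (normSq w : ℂ) := by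
      rw [← mul_conj]; ring
    rw [h, ← normSq_eq_norm_sq]
    simp only [sub_re, re_ofReal_mul, ← ofReal_mul, ofReal_re]
  have hlin : (a * conj w + b * w).re ≤ (‖a‖ + ‖b‖) * ‖w‖ :=
    calc (a * conj w + b * w).re ≤ ‖a * conj w + b * w‖ := re_le_norm _
      _ ≤ ‖a * conj w‖ + ‖b * w‖ := norm_add_le _ _
      _ = (‖a‖ + ‖b‖) * ‖w‖ := by simp [add_mul]
  have hconst : -(a * b).re ≤ ‖a‖ * ‖b‖ :=
    neg_le.mp (norm_mul a b ▸ neg_le_of_abs_le (abs_re_le_norm (a * b)))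
  rw [hexpand]
  nlinarith [Real.pi_pos]

lemma integrable_pow_mul_conj_pow_mul_twistedGaussian (k l : ℕ) :
    Integrable fun w => w ^ k * conj w ^ l * twistedGaussian a b w := by
  set β := π * (‖a‖ + ‖b‖) + 1
  have hcont : Continuous (twistedGaussian a b) := (differentiable_twistedGaussian a b).continuous
  refine ((integrable_exp_neg_mul_sq_norm (V := ℂ) (c := π / 2) (by positivity)).const_mul
    ((k + l).factorial * Real.exp (β ^ 2 / (2 * π) + π * (‖a‖ * ‖b‖)))).mono'
    (by fun_prop) (Eventually.of_forall fun w => ?_)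
  have hpow : ‖w‖ ^ (k + l) ≤ (k + l).factorial * Real.exp ‖w‖ := by
    have := Real.pow_div_factorial_le_exp _ (norm_nonneg w) (k + l)
    rwa [div_le_iff₀ (by positivity), mul_comm] at this
  calc ‖w ^ k * conj w ^ l * twistedGaussian a b w‖
      = ‖w‖ ^ (k + l) * ‖twistedGaussian a b w‖ := by simp [pow_add]
    _ ≤ ((k + l).factorial * Real.exp ‖w‖)
          * Real.exp (π * (‖a‖ + ‖b‖) * ‖w‖ + π * (‖a‖ * ‖b‖) - π * ‖w‖ ^ 2) :=
        mul_le_mul hpow (norm_twistedGaussian_le a b w) (norm_nonneg _) (by positivity)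
    _ = (k + l).factorial * Real.exp (β * ‖w‖ + π * (‖a‖ * ‖b‖) - π * ‖w‖ ^ 2) := by
        rw [mul_assoc, ← Real.exp_add]; congr 2; ring
    _ ≤ (k + l).factorial * (Real.exp (β ^ 2 / (2 * π) + π * (‖a‖ * ‖b‖))
          * Real.exp (-(π / 2) * ‖w‖ ^ 2)) := by
        gcongr; exact exp_mul_add_sub_mul_sq_le Real.pi_pos _ _ _
    _ = _ := by ring

lemma integrable_pow_mul_fderiv_twistedGaussian (v : ℂ) (m : ℕ) :
    Integrable fun w => w ^ m * fderiv ℝ (twistedGaussian a b) w v := by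
  have h := integrable_pow_mul_conj_pow_mul_twistedGaussian a b
  refine ((((h (m + 1) 0).const_mul (-π * conj v)).add
    ((h m 0).const_mul (π * (a * conj v + b * v)))).sub ((h m 1).const_mul (π * v))).congr
    (Eventually.of_forall fun w => ?_)
  simp only [Pi.add_apply, Pi.sub_apply, fderiv_twistedGaussian_apply]
  ring

lemma integral_twistedGaussian : ∫ w, twistedGaussian a b w = 1 := by
  have hπ : (π : ℂ) ≠ 0 := ofReal_ne_zero.mpr Real.pi_ne_zero
  rw [← volume_preserving_equiv_pi.symm.integral_comp
    measurableEquivPi.symm.measurableEmbedding]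
  have hG : ∀ p : Fin 2 → ℝ, twistedGaussian a b (measurableEquivPi.symm p)
      = cexp (-π * (a * b)) *
        cexp (-π * ∑ i, (p i : ℂ) ^ 2 + ∑ i, ![π * (a + b), π * I * (b - a)] i * p i) := by
    intro p
    rw [twistedGaussian, ← Complex.exp_add]
    congr 1
    simp only [measurableEquivPi_symm_apply, map_add, map_mul, conj_ofReal, conj_I,
      Fin.sum_univ_two, Matrix.cons_val_zero, Matrix.cons_val_one]
    linear_combination (π : ℂ) * (p 1) ^ 2 * I_sq
  simp_rw [hG]
  rw [integral_const_mul, GaussianFourier.integral_cexp_neg_mul_sum_add (by simp [Real.pi_pos]),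
    div_self hπ, one_cpow, one_mul, ← Complex.exp_add, ← Complex.exp_zero]
  congr 1
  simp only [Fin.sum_univ_two, Matrix.cons_val_zero, Matrix.cons_val_one]
  field_simp
  linear_combination (π : ℂ) * (b - a) ^ 2 * I_sq

lemma integral_pow_succ_mul_twistedGaussian (m : ℕ) :
    ∫ w, w ^ (m + 1) * twistedGaussian a b w = a * ∫ w, w ^ m * twistedGaussian a b w := by
  have hint : ∀ k, Integrable fun w => w ^ k * twistedGaussian a b w := fun k => by
    simpa using integrable_pow_mul_conj_pow_mul_twistedGaussian a b k 0
  have hzero := integral_mul_fderiv_add_I_mul_fderiv_eq_zero (differentiable_pow m)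
    (differentiable_twistedGaussian a b) (hint m)
    (by simpa [mul_assoc] using (hint (m - 1)).const_mul (m : ℂ))
    (integrable_pow_mul_fderiv_twistedGaussian a b 1 m)
    (integrable_pow_mul_fderiv_twistedGaussian a b I m)
  have hsplit : ∀ w, w ^ m * (2 * π * (a - w) * twistedGaussian a b w)
      = 2 * π * a * (w ^ m * twistedGaussian a b w)
        - 2 * π * (w ^ (m + 1) * twistedGaussian a b w) := fun w => by ring
  simp only [fderiv_twistedGaussian_one_add_I_mul, hsplit] at hzero
  rw [integral_sub ((hint m).const_mul _) ((hint (m + 1)).const_mul _), integral_const_mul,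
    integral_const_mul] at hzero
  have hπ : (2 * π : ℂ) ≠ 0 := mul_ne_zero two_ne_zero (ofReal_ne_zero.mpr Real.pi_ne_zero)
  apply mul_left_cancel₀ hπ
  linear_combination -hzero

lemma integral_pow_mul_twistedGaussian (m : ℕ) :
    ∫ w, w ^ m * twistedGaussian a b w = a ^ m := by
  induction m with
  | zero => simpa using integral_twistedGaussian a b
  | succ m ih => rw [integral_pow_succ_mul_twistedGaussian, ih, pow_succ, mul_comm]

lemma integral_conj_pow_mul_twistedGaussian (m : ℕ) :
    ∫ w, conj w ^ m * twistedGaussian a b w = b ^ m := by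
  rw [← conjLIE.measurePreserving.integral_comp conjLIE.toHomeomorph.measurableEmbedding]
  simp only [conjLIE_apply, conj_conj, twistedGaussian_conj]
  rw [integral_pow_mul_twistedGaussian]

end TwistedGaussian

lemma prod_pow_single_one {ι M : Type*} [Fintype ι] [DecidableEq ι] [CommMonoid M] (v : ι → M)
    (i : ι) : ∏ k, v k ^ (Pi.single i 1 : ι → ℕ) k = v i := by
  simp [Pi.single_apply, pow_ite]

section BergmanKernel

variable {n : ℕ} (z z' : Fin n → ℂ)

lemma bergK_mul_bergK (w : Fin n → ℂ) :
    bergK z w * bergK w z' = bergK z z' * ∏ k, twistedGaussian (z k) (conj (z' k)) (w k) := by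
  simp only [bergK, twistedGaussian, ← Complex.exp_sum, ← Complex.exp_add]
  congr 1
  simp only [Finset.mul_sum, ← Finset.sum_add_distrib]
  refine Finset.sum_congr rfl fun k _ => ?_
  simp only [← mul_conj]
  ring

lemma integral_bergK_mul_prod_mul_bergK (g : Fin n → ℂ → ℂ) :
    ∫ w, bergK z w * (∏ k, g k (w k)) * bergK w z'
      = bergK z z' * ∏ k, ∫ x, g k x * twistedGaussian (z k) (conj (z' k)) x := by
  have hsplit : ∀ w, bergK z w * (∏ k, g k (w k)) * bergK w z'
      = bergK z z' * ∏ k, g k (w k) * twistedGaussian (z k) (conj (z' k)) (w k) := fun w => by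
    rw [mul_right_comm, bergK_mul_bergK, Finset.prod_mul_distrib]
    ring
  simp_rw [hsplit]
  rw [integral_const_mul, integral_fintype_prod_volume_eq_prod
    fun k x => g k x * twistedGaussian (z k) (conj (z' k)) x]

lemma integral_bergK_mul_prod_pow_mul_bergK (m : Fin n → ℕ) :
    ∫ w, bergK z w * (∏ k, w k ^ m k) * bergK w z' = (∏ k, z k ^ m k) * bergK z z' := by
  rw [integral_bergK_mul_prod_mul_bergK z z' fun k x => x ^ m k, mul_comm]
  simp only [integral_pow_mul_twistedGaussian]

lemma integral_bergK_mul_prod_conj_pow_mul_bergK (m : Fin n → ℕ) :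
    ∫ w, bergK z w * (∏ k, conj (w k) ^ m k) * bergK w z'
      = (∏ k, conj (z' k) ^ m k) * bergK z z' := by
  rw [integral_bergK_mul_prod_mul_bergK z z' fun k x => conj x ^ m k, mul_comm]
  simp only [integral_conj_pow_mul_twistedGaussian]

end BergmanKernel

/-- `∫ 𝒫(z, w) w_i w_j 𝒫(w, z') dW = z_i z_j 𝒫(z, z')` and
`∫ 𝒫(z, w) w̄_i w̄_j 𝒫(w, z') dW = z̄'_i z̄'_j 𝒫(z, z')`. -/
theorem bergK_quadratic {n : ℕ} (i j : Fin n) (z z' : Fin n → ℂ) :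
    (∫ w : Fin n → ℂ, bergK z w * (w i * w j) * bergK w z') = z i * z j * bergK z z' ∧
    (∫ w : Fin n → ℂ, bergK z w * ((starRingEnd ℂ) (w i) * (starRingEnd ℂ) (w j)) * bergK w z')
      = (starRingEnd ℂ) (z' i) * (starRingEnd ℂ) (z' j) * bergK z z' := by
  have hprod : ∀ v : Fin n → ℂ, ∏ k, v k ^ (Pi.single i 1 + Pi.single j 1 : Fin n → ℕ) k
      = v i * v j := fun v => by
    simp only [Pi.add_apply, pow_add, Finset.prod_mul_distrib, prod_pow_single_one]
  have hw := integral_bergK_mul_prod_pow_mul_bergK z z' (Pi.single i 1 + Pi.single j 1)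
  have hw' := integral_bergK_mul_prod_conj_pow_mul_bergK z z' (Pi.single i 1 + Pi.single j 1)
  simp only [hprod] at hw hw'
  exact ⟨hw, hw'⟩
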